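/- Let F be a linearly ordered field and let 𝓛 = {L_1, …, L_d} be a set of d ≥ 1 distinct lines in F², L_i the zero set of an affine function f_i(x,y) = a_i·x + b_i·y − c_i with (a_i,b_i) ≠ (0,0); parallel lines and concurrencies are allowed. Let P be the (finite) set of points lying on at least two of the lines, and for p ∈ P let k_p = #{i : p ∈ L_i}. Partition {1, …, d} into parallel classes (i and j in the same class iff a_i·b_j = a_j·b_i) of sizes l_1, …, l_r. Then the number of regions of 𝓛 equals 1 + d + C(d,2) − Σ_{p ∈ P} C(k_p − 1, 2) − Σ_{t=1}^{r} C(l_t, 2). (Count of regions of the complement of the zero set of a polynomial in two variables that factors completely into linear factors, in terms of the degree d of its reduced polynomial, the orders of vanishing k_p, and the parallel class sizes l_t.) -/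

import Mathlib

/-- The affine functional `p ↦ a i * p.1 + b i * p.2 - c i` cutting out the `i`-th line. -/
def arrLine {F : Type*} [Field F] [LinearOrder F] [IsStrictOrderedRing F] {d : ℕ} (a b c : Fin d → F)
    (i : Fin d) (p : F × F) : F :=
  a i * p.1 + b i * p.2 - c i

/-- The open region of the family of lines associated to the sign vector `ε`
(`true ↦ +1`, `false ↦ -1`). -/
def arrRegion {F : Type*} [Field F] [LinearOrder F] [IsStrictOrderedRing F] {d : ℕ} (a b c : Fin d → F)
    (ε : Fin d → Bool) : Set (F × F) :=
  {p : F × F | ∀ i : Fin d, 0 < (if ε i then (1 : F) else -1) * arrLine a b c i p}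

/-!
Add the lines one at a time. A new line `L` splits exactly the regions it meets into two: a region
is convex, so if it misses `L` it lies on one side of `L`, and it is open, so if it meets `L` it
meets both sides. The regions meeting `L` are the intervals into which the earlier lines cut `L`,
one more than the number of distinct points of `L` on earlier lines. Summing over the lines gives
`1 + d + Σ_p (k_p - 1)` regions. Each pair of lines is either parallel or meets at exactly one
point of `P`, so `C(d,2) = Σ_t C(l_t,2) + Σ_p C(k_p,2)`, and `C(k,2) - C(k-1,2) = k - 1`.
-/

namespace AffineArrangement

open Set Filter

variable {F : Type*} [Field F] {V : Type*} [AddCommGroup V] [Module F V] {ι : Type*}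

lemma linear_ne_zero_of_apply_eq_zero {g : V →ᵃ[F] F} (hg : g ≠ 0) {x : V} (hx : g x = 0) :
    g.linear ≠ 0 := by
  intro h
  obtain ⟨q, rfl⟩ := (AffineMap.linear_eq_zero_iff_exists_const g).1 h
  exact hg (by ext; simp_all)

def zeroLocus (f : ι → V →ᵃ[F] F) : Set V :=
  ⋃ i, {x | f i x = 0}

lemma zeroLocus_comp {W : Type*} [AddCommGroup W] [Module F W] (f : ι → V →ᵃ[F] F)
    (φ : W →ᵃ[F] V) : zeroLocus (fun i => (f i).comp φ) = φ ⁻¹' zeroLocus f := by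
  ext t
  simp [zeroLocus]

variable [LinearOrder F]

def signRegion (f : ι → V →ᵃ[F] F) (ε : ι → Bool) : Set V :=
  {x | ∀ i, 0 < (if ε i then (1 : F) else -1) * f i x}

def regions (f : ι → V →ᵃ[F] F) : Set (ι → Bool) :=
  {ε | (signRegion f ε).Nonempty}

def signVec (f : ι → V →ᵃ[F] F) (x : V) : ι → Bool :=
  fun i => decide (0 < f i x)

def regionsMeeting (f : ι → V →ᵃ[F] F) (S : Set V) : Set (ι → Bool) :=
  {ε | (signRegion f ε ∩ S).Nonempty}

lemma regions_eq_univ_of_isEmpty [IsEmpty ι] (f : ι → V →ᵃ[F] F) : regions f = univ :=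
  eq_univ_of_forall fun _ => ⟨0, isEmptyElim⟩

lemma signRegion_fin_succ {n : ℕ} (f : Fin (n + 1) → V →ᵃ[F] F) (ε : Fin (n + 1) → Bool) :
    signRegion f ε = signRegion (Fin.init f) (Fin.init ε) ∩
      {x | 0 < (if ε (Fin.last n) then (1 : F) else -1) * f (Fin.last n) x} := by
  ext x
  exact Fin.forall_fin_succ'

lemma regions_comp {W : Type*} [AddCommGroup W] [Module F W] (f : ι → V →ᵃ[F] F)
    (φ : W →ᵃ[F] V) : regions (fun i => (f i).comp φ) = regionsMeeting f (range φ) := by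
  ext ε
  constructor
  · rintro ⟨t, ht⟩
    exact ⟨φ t, ht, t, rfl⟩
  · rintro ⟨_, hx, t, rfl⟩
    exact ⟨t, hx⟩

variable [IsStrictOrderedRing F]

lemma pos_sign_mul_iff {s : Bool} {r : F} :
    0 < (if s then (1 : F) else -1) * r ↔ r ≠ 0 ∧ s = decide (0 < r) := by
  cases s
  · simp only [eq_comm (a := false), Bool.true_eq_false, ↓reduceIte, neg_mul, one_mul,
      Left.neg_pos_iff, ne_eq, decide_eq_false_iff_not, not_lt]
    exact ⟨fun h => ⟨h.ne, h.le⟩, fun h => lt_of_le_of_ne h.2 h.1⟩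
  · simp only [↓reduceIte, one_mul, ne_eq, eq_comm (a := true), decide_eq_true_eq, iff_and_self]
    exact fun h => h.ne'

lemma mem_signRegion_iff {f : ι → V →ᵃ[F] F} {ε : ι → Bool} {x : V} :
    x ∈ signRegion f ε ↔ x ∉ zeroLocus f ∧ ε = signVec f x := by
  simp only [signRegion, mem_ofPred_eq, pos_sign_mul_iff, forall_and, zeroLocus, mem_iUnion,
    not_exists, funext_iff, signVec]

lemma regionsMeeting_eq_image (f : ι → V →ᵃ[F] F) (S : Set V) :
    regionsMeeting f S = signVec f '' (S \ zeroLocus f) := by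
  ext ε
  simp only [regionsMeeting, mem_ofPred_eq, mem_image, Set.mem_sdiff, Set.Nonempty, mem_inter_iff,
    mem_signRegion_iff]
  grind

lemma regions_fin_succ {n : ℕ} (f : Fin (n + 1) → V →ᵃ[F] F) :
    regions f =
      (fun ε => Fin.snoc ε true) '' regionsMeeting (Fin.init f) {x | 0 < f (Fin.last n) x} ∪
      (fun ε => Fin.snoc ε false) '' regionsMeeting (Fin.init f) {x | f (Fin.last n) x < 0} := by
  ext ε
  simp only [mem_union, mem_image, regions, regionsMeeting, mem_ofPred_eq, signRegion_fin_succ]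
  constructor
  · intro h
    cases hs : ε (Fin.last n)
    · exact .inr ⟨Fin.init ε, by simpa [hs] using h, by rw [← hs, Fin.snoc_init_self]⟩
    · exact .inl ⟨Fin.init ε, by simpa [hs] using h, by rw [← hs, Fin.snoc_init_self]⟩
  · rintro (⟨ε, h, rfl⟩ | ⟨ε, h, rfl⟩) <;> simpa using h

lemma convex_signRegion (f : ι → V →ᵃ[F] F) (ε : ι → Bool) : Convex F (signRegion f ε) := by
  have : signRegion f ε = ⋂ i, ((if ε i then (1 : F) else -1) • f i) ⁻¹' Ioi 0 := by
    ext x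
    simp only [signRegion, mem_iInter, mem_preimage, mem_Ioi, AffineMap.coe_smul, Pi.smul_apply,
      smul_eq_mul]
    exact Iff.rfl
  rw [this]
  exact convex_iInter fun i => (convex_Ioi 0).affine_preimage _

lemma exists_mem_signRegion_eq_zero {f : ι → V →ᵃ[F] F} {ε : ι → Bool} {g : V →ᵃ[F] F}
    {y z : V} (hy : y ∈ signRegion f ε) (hz : z ∈ signRegion f ε) (hgy : 0 < g y)
    (hgz : g z < 0) : ∃ x ∈ signRegion f ε, g x = 0 := by
  have hyz : 0 < g y - g z := by linarith
  refine ⟨AffineMap.lineMap y z (g y / (g y - g z)),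
    (convex_signRegion f ε).lineMap_mem hy hz ⟨by positivity, ?_⟩, ?_⟩
  · rw [div_le_one hyz]
    linarith
  · rw [AffineMap.apply_lineMap, AffineMap.lineMap_apply_ring']
    field_simp
    ring

lemma eventually_pos_add_inv_mul {α : F} (hα : 0 < α) (β : F) :
    ∀ᶠ u in atTop, 0 < α + u⁻¹ * β := by
  filter_upwards [eventually_gt_atTop (|β| / α), eventually_gt_atTop 0] with u hu hu0
  rw [div_lt_iff₀ hα] at hu
  have : 0 < u * α + β := by linarith [neg_abs_le β]
  have : 0 < u⁻¹ * (u * α + β) := by positivity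
  rwa [mul_add, inv_mul_cancel_left₀ hu0.ne'] at this

/-- Regions are open. `F` carries no topology, so steps are made small by scaling with `u⁻¹` for
all large `u`. -/
lemma exists_mem_signRegion_pos {f : ι → V →ᵃ[F] F} [Finite ι] {ε : ι → Bool}
    {g : V →ᵃ[F] F} (hg : g ≠ 0) {x : V} (hx : x ∈ signRegion f ε) (hgx : g x = 0) :
    ∃ y ∈ signRegion f ε, 0 < g y := by
  obtain ⟨v, hv⟩ : ∃ v, g.linear v ≠ 0 :=
    not_forall.1 fun h => linear_ne_zero_of_apply_eq_zero hg hgx (LinearMap.ext h)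
  have hmove (h : V →ᵃ[F] F) (u : F) :
      h (u⁻¹ • g.linear v • v +ᵥ x) = h x + u⁻¹ * (g.linear v * h.linear v) := by
    rw [AffineMap.map_vadd, vadd_eq_add, map_smul, map_smul, smul_eq_mul, smul_eq_mul]
    ring
  have hev : ∀ᶠ u : F in atTop,
      0 < u ∧ ∀ i, 0 < (if ε i then (1 : F) else -1) * f i (u⁻¹ • g.linear v • v +ᵥ x) := by
    refine (eventually_gt_atTop 0).and (eventually_all.2 fun i => ?_)
    filter_upwards [eventually_pos_add_inv_mul (hx i)
      ((if ε i then 1 else -1) * (g.linear v * (f i).linear v))] with u hu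
    rw [hmove]
    linarith
  obtain ⟨u, hu, hmem⟩ := hev.exists
  refine ⟨_, hmem, ?_⟩
  rw [hmove, hgx, zero_add]
  have := mul_self_pos.2 hv
  positivity

lemma exists_mem_signRegion_neg {f : ι → V →ᵃ[F] F} [Finite ι] {ε : ι → Bool}
    {g : V →ᵃ[F] F} (hg : g ≠ 0) {x : V} (hx : x ∈ signRegion f ε) (hgx : g x = 0) :
    ∃ y ∈ signRegion f ε, g y < 0 := by
  obtain ⟨y, hy, hgy⟩ := exists_mem_signRegion_pos (neg_ne_zero.2 hg) hx (by simp [hgx])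
  exact ⟨y, hy, by simpa using hgy⟩

lemma regionsMeeting_pos_union_neg {f : ι → V →ᵃ[F] F} [Finite ι] {g : V →ᵃ[F] F} (hg : g ≠ 0) :
    regionsMeeting f {x | 0 < g x} ∪ regionsMeeting f {x | g x < 0} = regions f := by
  refine subset_antisymm (union_subset ?_ ?_) fun ε ⟨x, hx⟩ => ?_
  · exact fun ε h => h.mono inter_subset_left
  · exact fun ε h => h.mono inter_subset_left
  rcases lt_trichotomy (g x) 0 with hgx | hgx | hgx
  · exact .inr ⟨x, hx, hgx⟩
  · exact .inl (exists_mem_signRegion_pos hg hx hgx)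
  · exact .inl ⟨x, hx, hgx⟩

lemma regionsMeeting_pos_inter_neg {f : ι → V →ᵃ[F] F} [Finite ι] {g : V →ᵃ[F] F} (hg : g ≠ 0) :
    regionsMeeting f {x | 0 < g x} ∩ regionsMeeting f {x | g x < 0} =
      regionsMeeting f {x | g x = 0} := by
  refine subset_antisymm ?_ ?_
  · rintro ε ⟨⟨y, hy, hgy⟩, z, hz, hgz⟩
    exact exists_mem_signRegion_eq_zero hy hz hgy hgz
  · rintro ε ⟨x, hx, hgx⟩
    exact ⟨exists_mem_signRegion_pos hg hx hgx, exists_mem_signRegion_neg hg hx hgx⟩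

theorem ncard_regions_fin_succ {n : ℕ} (f : Fin (n + 1) → V →ᵃ[F] F) (hf : f (Fin.last n) ≠ 0) :
    (regions f).ncard = (regions (Fin.init f)).ncard +
      (regionsMeeting (Fin.init f) {x | f (Fin.last n) x = 0}).ncard := by
  have hsnoc (s : Bool) :
      Function.Injective fun ε : Fin n → Bool => (Fin.snoc ε s : Fin (n + 1) → Bool) :=
    fun ε ε' h => by simpa using congrArg Fin.init h
  rw [regions_fin_succ, ncard_union_eq, (hsnoc true).injOn.ncard_image,
    (hsnoc false).injOn.ncard_image, ← ncard_union_add_ncard_inter,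
    regionsMeeting_pos_union_neg hf, regionsMeeting_pos_inter_neg hf]
  rw [disjoint_iff_forall_ne]
  rintro _ ⟨ε, -, rfl⟩ _ ⟨ε', -, rfl⟩ h
  simpa using congrFun h (Fin.last n)

lemma setOf_apply_eq_zero_subsingleton {h : F →ᵃ[F] F} (hh : h ≠ 0) :
    {t | h t = 0}.Subsingleton := by
  intro t₁ ht₁ t₂ ht₂
  by_contra hne
  refine linear_ne_zero_of_apply_eq_zero hh ht₁ (LinearMap.ext_ring ?_)
  have : h.linear ((t₂ - t₁) • 1) = 0 := by
    rw [smul_eq_mul, mul_one, ← vsub_eq_sub, AffineMap.linearMap_vsub, ht₁, ht₂, vsub_self]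
  rw [map_smul, smul_eq_mul, mul_eq_zero] at this
  exact this.resolve_left (sub_ne_zero.2 (Ne.symm hne))

theorem ncard_regions_eq_ncard_zeroLocus_add_one {m : ℕ} (h : Fin m → F →ᵃ[F] F)
    (hh : ∀ i, h i ≠ 0) :
    (regions h).ncard = (zeroLocus h).ncard + 1 := by
  induction m with
  | zero => simp [regions_eq_univ_of_isEmpty, zeroLocus]
  | succ m ih =>
    set Z := zeroLocus (Fin.init h)
    set Zg := {t | h (Fin.last m) t = 0}
    have hZ : zeroLocus h = Z ∪ (Zg \ Z) := by
      simp only [union_sdiff_self, Z, Zg, zeroLocus, iUnion_ofPred, Fin.exists_fin_succ']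
      rfl
    have hZfin : Z.Finite := finite_iUnion fun i => (setOf_apply_eq_zero_subsingleton (hh _)).finite
    have hZg : Zg.Subsingleton := setOf_apply_eq_zero_subsingleton (hh _)
    rw [ncard_regions_fin_succ h (hh _), ih (Fin.init h) fun i => hh _, regionsMeeting_eq_image,
      ((hZg.anti sdiff_subset).injOn _).ncard_image, hZ, ncard_union_eq disjoint_sdiff_right hZfin
        (hZg.anti sdiff_subset).finite]
    ring

end AffineArrangement

namespace Finset

lemma card_filter_exists_lt {α : Type*} [LinearOrder α] (s : Finset α) :
    #{j ∈ s | ∃ i ∈ s, i < j} = #s - 1 := by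
  rcases s.eq_empty_or_nonempty with rfl | hs
  · simp
  have : {j ∈ s | ∃ i ∈ s, i < j} = s.erase (s.min' hs) := by
    ext j
    simp only [mem_filter, mem_erase]
    constructor
    · rintro ⟨hj, i, hi, hij⟩
      exact ⟨((s.min'_le i hi).trans_lt hij).ne', hj⟩
    · rintro ⟨hne, hj⟩
      exact ⟨hj, _, s.min'_mem hs, lt_of_le_of_ne (s.min'_le j hj) hne.symm⟩
  rw [this, card_erase_of_mem (s.min'_mem hs)]

theorem choose_two_card_eq_sum {ι κ : Type*} [DecidableEq ι] {s : Finset ι} {K : Finset κ}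
    {B : κ → Finset ι} (hB : ∀ k ∈ K, B k ⊆ s)
    (h : ∀ x ∈ s, ∀ y ∈ s, x ≠ y → ∃! k, k ∈ K ∧ x ∈ B k ∧ y ∈ B k) :
    (#s).choose 2 = ∑ k ∈ K, (#(B k)).choose 2 := by
  have hpairs : powersetCard 2 s = K.biUnion fun k => powersetCard 2 (B k) := by
    ext t
    simp only [mem_powersetCard, mem_biUnion, card_eq_two]
    constructor
    · rintro ⟨hts, x, y, hxy, rfl⟩
      obtain ⟨k, ⟨hk, hx, hy⟩, -⟩ := h x (hts (by simp)) y (hts (by simp)) hxy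
      exact ⟨k, hk, by simp [insert_subset_iff, hx, hy], x, y, hxy, rfl⟩
    · rintro ⟨k, hk, htk, x, y, hxy, rfl⟩
      exact ⟨htk.trans (hB k hk), x, y, hxy, rfl⟩
  have hdisj : (K : Set κ).PairwiseDisjoint fun k => powersetCard 2 (B k) := by
    intro k hk k' hk' hne
    refine disjoint_left.2 fun t ht ht' => hne ?_
    simp only [mem_powersetCard, card_eq_two] at ht ht'
    obtain ⟨htk, x, y, hxy, rfl⟩ := ht
    have hx : x ∈ B k := htk (by simp)
    have hy : y ∈ B k := htk (by simp)
    exact (h x (hB k hk hx) y (hB k hk hy) hxy).unique ⟨hk, hx, hy⟩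
      ⟨hk', ht'.1 (by simp), ht'.1 (by simp)⟩
  rw [← card_powersetCard, hpairs, card_biUnion hdisj]
  simp only [card_powersetCard]

end Finset

lemma Nat.choose_two_eq_choose_two_sub_one_add (n : ℕ) :
    n.choose 2 = (n - 1).choose 2 + (n - 1) := by
  cases n with
  | zero => rfl
  | succ n => simp [Nat.choose_succ_succ', add_comm]

section PlaneLines

open Set AffineArrangement
open scoped Finset

variable {F : Type*} [Field F] [LinearOrder F] [IsStrictOrderedRing F] {d : ℕ} (a b c : Fin d → F)

def arrAffine (i : Fin d) : F × F →ᵃ[F] F where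
  toFun := arrLine a b c i
  linear := a i • LinearMap.fst F F F + b i • LinearMap.snd F F F
  map_vadd' p v := by
    simp only [arrLine, vadd_eq_add, Prod.fst_add, Prod.snd_add, LinearMap.add_apply,
      LinearMap.smul_apply, LinearMap.fst_apply, smul_eq_mul, LinearMap.snd_apply]
    ring

@[simp]
lemma arrAffine_apply (i : Fin d) (p : F × F) : arrAffine a b c i p = arrLine a b c i p := rfl

/-- The foot of the perpendicular from the origin plus multiples of the direction `(-b j, a j)`. -/
def lineParam (j : Fin d) : F →ᵃ[F] F × F where
  toFun t := (a j * c j / (a j ^ 2 + b j ^ 2) - t * b j,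
    b j * c j / (a j ^ 2 + b j ^ 2) + t * a j)
  linear := LinearMap.smulRight LinearMap.id (-b j, a j)
  map_vadd' t s := by
    ext <;> simp only [vadd_eq_add, LinearMap.coe_smulRight, LinearMap.id_coe, id_eq, Prod.smul_mk,
      smul_eq_mul, mul_neg, Prod.mk_add_mk] <;> ring

def earlierIntersections (j : Fin d) : Set (F × F) :=
  {p | arrLine a b c j p = 0 ∧ ∃ i < j, arrLine a b c i p = 0}

variable {a b c}

@[simp]
lemma arrLine_init {n : ℕ} (a b c : Fin (n + 1) → F) (i : Fin n) (p : F × F) :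
    arrLine (Fin.init a) (Fin.init b) (Fin.init c) i p = arrLine a b c i.castSucc p := rfl

lemma arrLine_eq_zero_of_parallel {i j : Fin d} (hi : (a i, b i) ≠ (0, 0))
    (hpar : a i * b j = a j * b i) {p q : F × F} (hpi : arrLine a b c i p = 0)
    (hpj : arrLine a b c j p = 0) (hqi : arrLine a b c i q = 0) : arrLine a b c j q = 0 := by
  unfold arrLine at *
  have ha : a i * (a j * q.1 + b j * q.2 - c j) = 0 := by
    linear_combination a j * hqi - a j * hpi + a i * hpj + (q.2 - p.2) * hpar
  have hb : b i * (a j * q.1 + b j * q.2 - c j) = 0 := by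
    linear_combination b j * hqi - b j * hpi + b i * hpj - (q.1 - p.1) * hpar
  by_contra h
  exact hi (by simp [(mul_eq_zero.1 ha).resolve_right h, (mul_eq_zero.1 hb).resolve_right h])

lemma eq_of_parallel_of_arrLine_eq_zero (hnd : ∀ i : Fin d, (a i, b i) ≠ (0, 0))
    (hdistinct : ∀ i j : Fin d,
      {p : F × F | arrLine a b c i p = 0} = {p : F × F | arrLine a b c j p = 0} → i = j)
    {i j : Fin d} (hpar : a i * b j = a j * b i) {p : F × F} (hpi : arrLine a b c i p = 0)
    (hpj : arrLine a b c j p = 0) : i = j :=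
  hdistinct i j <| ext fun _ => ⟨arrLine_eq_zero_of_parallel (hnd i) hpar hpi hpj,
    arrLine_eq_zero_of_parallel (hnd j) hpar.symm hpj hpi⟩

lemma existsUnique_arrLine_eq_zero {i j : Fin d} (h : a i * b j ≠ a j * b i) :
    ∃! p : F × F, arrLine a b c i p = 0 ∧ arrLine a b c j p = 0 := by
  -- Cramer's rule
  have hD : a i * b j - a j * b i ≠ 0 := sub_ne_zero.2 h
  have hx := div_mul_cancel₀ (c i * b j - c j * b i) hD
  have hy := div_mul_cancel₀ (a i * c j - a j * c i) hD
  refine ⟨((c i * b j - c j * b i) / (a i * b j - a j * b i),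
    (a i * c j - a j * c i) / (a i * b j - a j * b i)), ⟨?_, ?_⟩, ?_⟩
  · refine mul_left_cancel₀ hD ?_
    simp only [arrLine]
    linear_combination a i * hx + b i * hy
  · refine mul_left_cancel₀ hD ?_
    simp only [arrLine]
    linear_combination a j * hx + b j * hy
  · rintro q ⟨hi, hj⟩
    unfold arrLine at hi hj
    refine Prod.ext ((eq_div_iff hD).2 ?_) ((eq_div_iff hD).2 ?_)
    · linear_combination b j * hi - b i * hj
    · linear_combination a i * hj - a j * hi

lemma arrAffine_ne_zero {i : Fin d} (hi : (a i, b i) ≠ (0, 0)) : arrAffine a b c i ≠ 0 := by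
  intro h
  have hlin := congrArg AffineMap.linear h
  refine hi (Prod.ext ?_ ?_)
  · simpa [arrAffine] using LinearMap.congr_fun hlin (1, 0)
  · simpa [arrAffine] using LinearMap.congr_fun hlin (0, 1)

lemma arrLine_lineParam (i j : Fin d) (t : F) :
    arrLine a b c i (lineParam a b c j t) =
      arrLine a b c i (lineParam a b c j 0) + t * (a j * b i - a i * b j) := by
  simp only [arrLine, lineParam, AffineMap.coe_mk]
  ring

lemma injective_lineParam {j : Fin d} (hj : (a j, b j) ≠ (0, 0)) :
    Function.Injective (lineParam a b c j) := by
  intro t s h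
  simp only [lineParam, AffineMap.coe_mk, Prod.mk.injEq] at h
  by_contra hts
  refine hj (Prod.ext ?_ ?_)
  · exact (mul_eq_zero.1 (show (t - s) * a j = 0 by linear_combination h.2)).resolve_left
      (sub_ne_zero.2 hts)
  · exact (mul_eq_zero.1 (show (t - s) * b j = 0 by linear_combination -h.1)).resolve_left
      (sub_ne_zero.2 hts)

lemma range_lineParam {j : Fin d} (hj : (a j, b j) ≠ (0, 0)) :
    range (lineParam a b c j) = {p | arrLine a b c j p = 0} := by
  have hn : a j ^ 2 + b j ^ 2 ≠ 0 := by
    rw [sq, sq, Ne, mul_self_add_mul_self_eq_zero]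
    simpa using hj
  ext p
  simp only [lineParam, AffineMap.coe_mk, mem_range, arrLine, mem_ofPred_eq]
  constructor
  · rintro ⟨t, rfl⟩
    field_simp
    ring
  · intro hp
    refine ⟨(a j * p.2 - b j * p.1) / (a j ^ 2 + b j ^ 2), Prod.ext ?_ ?_⟩
    · field_simp
      linear_combination (-a j) * hp
    · field_simp
      linear_combination (-b j) * hp

lemma arrAffine_comp_lineParam_ne_zero (hnd : ∀ i, (a i, b i) ≠ (0, 0))
    (hdistinct : ∀ i j : Fin d,
      {p : F × F | arrLine a b c i p = 0} = {p : F × F | arrLine a b c j p = 0} → i = j)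
    {i j : Fin d} (hij : i ≠ j) : (arrAffine a b c i).comp (lineParam a b c j) ≠ 0 := by
  intro h
  have hi (t : F) : arrLine a b c i (lineParam a b c j t) = 0 := congrArg (· t) h
  have hj (t : F) : arrLine a b c j (lineParam a b c j t) = 0 :=
    (range_lineParam (hnd j)).subset (mem_range_self t)
  have hpar : a i * b j = a j * b i := by
    linear_combination arrLine_lineParam (a := a) (b := b) (c := c) i j 1 - hi 1 + hi 0
  exact hij (eq_of_parallel_of_arrLine_eq_zero hnd hdistinct hpar (hi 0) (hj 0))

lemma earlierIntersections_last {n : ℕ} (a b c : Fin (n + 1) → F) :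
    earlierIntersections a b c (Fin.last n) = {p | arrLine a b c (Fin.last n) p = 0} ∩
      zeroLocus (arrAffine (Fin.init a) (Fin.init b) (Fin.init c)) := by
  ext p
  simp [earlierIntersections, zeroLocus, Fin.exists_fin_succ']

lemma earlierIntersections_castSucc {n : ℕ} (a b c : Fin (n + 1) → F) (j : Fin n) :
    earlierIntersections a b c j.castSucc =
      earlierIntersections (Fin.init a) (Fin.init b) (Fin.init c) j := by
  ext p
  simp [earlierIntersections, Fin.exists_fin_succ', (Fin.castSucc_lt_last j).not_gt]

/-- Restricted to the last line, the earlier lines become affine functions on `F`. -/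
lemma ncard_regionsMeeting_last {n : ℕ} (a b c : Fin (n + 1) → F) (hnd : ∀ i, (a i, b i) ≠ (0, 0))
    (hdistinct : ∀ i j : Fin (n + 1),
      {p : F × F | arrLine a b c i p = 0} = {p : F × F | arrLine a b c j p = 0} → i = j) :
    (regionsMeeting (arrAffine (Fin.init a) (Fin.init b) (Fin.init c))
      {p | arrLine a b c (Fin.last n) p = 0}).ncard =
      (earlierIntersections a b c (Fin.last n)).ncard + 1 := by
  have hφ := injective_lineParam (c := c) (hnd (Fin.last n))
  rw [← range_lineParam (hnd _), ← regions_comp,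
    ncard_regions_eq_ncard_zeroLocus_add_one
      (fun i => (arrAffine (Fin.init a) (Fin.init b) (Fin.init c) i).comp _)
      fun i => arrAffine_comp_lineParam_ne_zero hnd hdistinct (Fin.castSucc_lt_last i).ne,
    zeroLocus_comp, ← preimage_inter_range, range_lineParam (hnd _),
    ncard_preimage_of_injective_subset_range hφ
      ((range_lineParam (hnd _)).symm ▸ inter_subset_right),
    inter_comm, earlierIntersections_last]

theorem ncard_regions_arrAffine {n : ℕ} (a b c : Fin n → F) (hnd : ∀ i, (a i, b i) ≠ (0, 0))
    (hdistinct : ∀ i j : Fin n,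
      {p : F × F | arrLine a b c i p = 0} = {p : F × F | arrLine a b c j p = 0} → i = j) :
    (regions (arrAffine a b c)).ncard = 1 + n + ∑ j, (earlierIntersections a b c j).ncard := by
  induction n with
  | zero => simp [regions_eq_univ_of_isEmpty]
  | succ n ih =>
    have hinit : Fin.init (arrAffine a b c) = arrAffine (Fin.init a) (Fin.init b) (Fin.init c) :=
      rfl
    rw [ncard_regions_fin_succ _ (arrAffine_ne_zero (hnd _)), hinit,
      ih (Fin.init a) (Fin.init b) (Fin.init c) (fun i => hnd _)
        fun i j h => Fin.castSucc_injective _ (hdistinct _ _ h)]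
    simp only [arrAffine_apply]
    rw [ncard_regionsMeeting_last a b c hnd hdistinct, Fin.sum_univ_castSucc]
    simp only [earlierIntersections_castSucc]
    ring

lemma sum_ncard_earlierIntersections {P : Finset (F × F)}
    (hP : ∀ p : F × F, p ∈ P ↔
      ∃ i j : Fin d, i ≠ j ∧ arrLine a b c i p = 0 ∧ arrLine a b c j p = 0) :
    ∑ j, (earlierIntersections a b c j).ncard = ∑ p ∈ P, (#{i | arrLine a b c i p = 0} - 1) := by
  classical
  have hE : ∀ j,
      (earlierIntersections a b c j).ncard = #{p ∈ P | p ∈ earlierIntersections a b c j} := by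
    intro j
    rw [← Set.ncard_coe_finset]
    congr 1
    ext p
    simp only [Finset.coe_filter, Set.mem_ofPred_eq, iff_and_self]
    rintro ⟨hj, i, hij, hi⟩
    exact (hP p).2 ⟨i, j, hij.ne, hi, hj⟩
  calc ∑ j, (earlierIntersections a b c j).ncard
      = ∑ j, ∑ p ∈ P, if p ∈ earlierIntersections a b c j then 1 else 0 :=
        Finset.sum_congr rfl fun j _ => by rw [hE, Finset.card_filter]
    _ = ∑ p ∈ P, #{j | p ∈ earlierIntersections a b c j} := by
        rw [Finset.sum_comm]
        exact Finset.sum_congr rfl fun p _ => (Finset.card_filter _ _).symm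
    _ = ∑ p ∈ P, (#{i | arrLine a b c i p = 0} - 1) := Finset.sum_congr rfl fun p _ => ?_
  rw [← Finset.card_filter_exists_lt]
  congr 1
  ext j
  simp only [Finset.mem_filter, Finset.mem_univ, true_and]
  exact and_congr_right fun _ => exists_congr fun i => and_comm

lemma choose_two_eq_sum_parallel_add_sum_points (hnd : ∀ i : Fin d, (a i, b i) ≠ (0, 0))
    (hdistinct : ∀ i j : Fin d,
      {p : F × F | arrLine a b c i p = 0} = {p : F × F | arrLine a b c j p = 0} → i = j)
    {P : Finset (F × F)}
    (hP : ∀ p : F × F, p ∈ P ↔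
      ∃ i j : Fin d, i ≠ j ∧ arrLine a b c i p = 0 ∧ arrLine a b c j p = 0)
    {r : ℕ} {cls : Fin d → Fin r} (hcls : ∀ i j : Fin d, cls i = cls j ↔ a i * b j = a j * b i) :
    d.choose 2 =
      ∑ t, (#{i | cls i = t}).choose 2 + ∑ p ∈ P, (#{i | arrLine a b c i p = 0}).choose 2 := by
  -- the blocks are the parallel classes and the pencils through the points of `P`
  have := Finset.choose_two_card_eq_sum (s := Finset.univ) (K := Finset.univ.disjSum P)
    (B := Sum.elim (fun t => ({i | cls i = t} : Finset (Fin d)))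
      (fun p => ({i | arrLine a b c i p = 0} : Finset (Fin d))))
    (fun _ _ => Finset.subset_univ _) ?_
  · simpa [Finset.sum_disjSum] using this
  intro x _ y _ hxy
  by_cases hpar : a x * b y = a y * b x
  · refine ⟨Sum.inl (cls x), ⟨by simp, by simp, by simp [(hcls x y).2 hpar]⟩, ?_⟩
    rintro (t | p) ⟨-, hx, hy⟩
    · simp_all
    · simp only [Sum.elim_inr, Finset.mem_filter, Finset.mem_univ, true_and] at hx hy
      exact absurd (eq_of_parallel_of_arrLine_eq_zero hnd hdistinct hpar hx hy) hxy
  · obtain ⟨p, ⟨hpx, hpy⟩, huniq⟩ := existsUnique_arrLine_eq_zero (c := c) hpar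
    refine ⟨Sum.inr p, ⟨by simpa using (hP p).2 ⟨x, y, hxy, hpx, hpy⟩, by simpa, by simpa⟩, ?_⟩
    rintro (t | q) ⟨-, hx, hy⟩
    · simp only [Sum.elim_inl, Finset.mem_filter, Finset.mem_univ, true_and] at hx hy
      exact absurd ((hcls x y).1 (hx.trans hy.symm)) hpar
    · simp only [Sum.elim_inr, Finset.mem_filter, Finset.mem_univ, true_and] at hx hy
      rw [huniq q ⟨hx, hy⟩]

end PlaneLines

open AffineArrangement Finset in
theorem count_regions_of_line_fold_general
    {F : Type*} [Field F] [LinearOrder F] [IsStrictOrderedRing F] (d : ℕ)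
    (a b c : Fin d → F)
    (hnd : ∀ i : Fin d, (a i, b i) ≠ (0, 0))
    (hdistinct : ∀ i j : Fin d,
      {p : F × F | arrLine a b c i p = 0} = {p : F × F | arrLine a b c j p = 0} → i = j)
    (P : Finset (F × F))
    (hP : ∀ p : F × F, p ∈ P ↔
      ∃ i j : Fin d, i ≠ j ∧ arrLine a b c i p = 0 ∧ arrLine a b c j p = 0)
    (r : ℕ) (cls : Fin d → Fin r)
    (hcls : ∀ i j : Fin d, cls i = cls j ↔ a i * b j = a j * b i) :
    (Nat.card {ε : Fin d → Bool // (arrRegion a b c ε).Nonempty} : ℤ)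
      = 1 + (d : ℤ) + (d.choose 2 : ℤ)
        - ∑ p ∈ P, ((Nat.card {i : Fin d // arrLine a b c i p = 0} - 1).choose 2 : ℤ)
        - ∑ t : Fin r, ((Nat.card {i : Fin d // cls i = t}).choose 2 : ℤ) := by
  have hregions : Nat.card {ε : Fin d → Bool // (arrRegion a b c ε).Nonempty}
      = 1 + d + ∑ p ∈ P, (#{i | arrLine a b c i p = 0} - 1) := by
    rw [← sum_ncard_earlierIntersections hP, ← ncard_regions_arrAffine a b c hnd hdistinct]
    exact Nat.card_coe_set_eq _
  have hpairs := choose_two_eq_sum_parallel_add_sum_points hnd hdistinct hP hcls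
  simp only [Nat.choose_two_eq_choose_two_sub_one_add #{i | arrLine a b c i _ = 0},
    sum_add_distrib] at hpairs
  simp only [Nat.card_eq_fintype_card, Fintype.card_subtype] at hregions ⊢
  rw [eq_sub_iff_add_eq, eq_sub_iff_add_eq]
  exact_mod_cast (by omega : _ + ∑ t : Fin r, (#{i | cls i = t}).choose 2
    + ∑ p ∈ P, (#{i | arrLine a b c i p = 0} - 1).choose 2 = 1 + d + d.choose 2)

/-- Count of regions of a line-fold (parallel lines and concurrencies allowed): for `d`
distinct lines, `P` the set of points on at least two lines, `k_p` the number of lines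
through `p ∈ P`, and `cls` the assignment of parallel classes, the number of regions is
`1 + d + C(d,2) - Σ_{p ∈ P} C(k_p - 1, 2) - Σ_t C(l_t, 2)` where `l_t` is the size of
the `t`-th parallel class.  (This counts the regions of the complement of the zero set
of a polynomial in two variables that factors completely into linear factors, `d` being
the degree of its reduced polynomial.) -/
theorem count_regions_of_line_fold
    {F : Type*} [Field F] [LinearOrder F] [IsStrictOrderedRing F] (d : ℕ) (hd : 1 ≤ d)
    (a b c : Fin d → F)
    (hnd : ∀ i : Fin d, (a i, b i) ≠ (0, 0))
    (hdistinct : ∀ i j : Fin d,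
      {p : F × F | arrLine a b c i p = 0} = {p : F × F | arrLine a b c j p = 0} → i = j)
    (P : Finset (F × F))
    (hP : ∀ p : F × F, p ∈ P ↔
      ∃ i j : Fin d, i ≠ j ∧ arrLine a b c i p = 0 ∧ arrLine a b c j p = 0)
    (r : ℕ) (cls : Fin d → Fin r)
    (hclsSurj : Function.Surjective cls)
    (hcls : ∀ i j : Fin d, cls i = cls j ↔ a i * b j = a j * b i) :
    (Nat.card {ε : Fin d → Bool // (arrRegion a b c ε).Nonempty} : ℤ)
      = 1 + (d : ℤ) + (d.choose 2 : ℤ)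
        - ∑ p ∈ P, ((Nat.card {i : Fin d // arrLine a b c i p = 0} - 1).choose 2 : ℤ)
        - ∑ t : Fin r, ((Nat.card {i : Fin d // cls i = t}).choose 2 : ℤ) :=
  count_regions_of_line_fold_general d a b c hnd hdistinct P hP r cls hcls
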